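/- arXiv:2603.05320 — 5 statements merged into one kernel-verified Lean document; each statement's English description precedes it below -/
import Mathlib

section
/- Let ι be a type, let τ₁, τ₂ ≥ 0, and let μ₁, μ₂ be probability mass functions on Finset ι that are locally decaying with rates τ₁ and τ₂ respectively. Consider the product distribution μ₁ ⊗ μ₂ on pairs (S₁, S₂) of finite subsets of ι (i.e., S₁ and S₂ are independent). Then for every finite subset B of ι, the probability under μ₁ ⊗ μ₂ of the event {(S₁,S₂) : B ⊆ S₁ ∪ S₂} is at most (τ₁ + τ₂)^{B.card}. In other words, the union of two independent locally decaying random subsets with rates τ₁ and τ₂ is locally decaying with rate τ₁ + τ₂. -/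
/-!
Split `B ⊆ S₁ ∪ S₂` according to which part `A = B ∩ S₁` of `B` the first set covers: then
`A ⊆ S₁` and `B \ A ⊆ S₂`. A union bound over all `A ⊆ B`, independence, and the decay of each
factor bound the probability by `∑_{A ⊆ B} τ₁ ^ |A| τ₂ ^ |B \ A|`, which is `(τ₁ + τ₂) ^ |B|`
by the binomial theorem.
-/

open scoped ENNReal

/-- A probability mass function `μ` on finite subsets of `ι` is *locally decaying*
with rate `τ` if for every finite `B ⊆ ι` the probability that `B` is contained in
the random subset is at most `τ ^ |B|`. -/
def LocallyDecaying {ι : Type*} [DecidableEq ι] (μ : PMF (Finset ι)) (τ : ℝ) : Prop :=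
  ∀ B : Finset ι,
    (∑' S : Finset ι, if B ⊆ S then μ S else 0) ≤ ENNReal.ofReal (τ ^ B.card)

open Finset

theorem Finset.sum_powerset_pow_mul_pow_sdiff {ι R : Type*} [DecidableEq ι] [CommSemiring R]
    (a b : R) (s : Finset ι) :
    ∑ t ∈ s.powerset, a ^ #t * b ^ #(s \ t) = (a + b) ^ #s := by
  rw [← sum_pow_mul_eq_add_pow]
  exact sum_congr rfl fun t ht => by rw [card_sdiff_of_subset (mem_powerset.1 ht)]

theorem ENNReal.tsum_tsum_sum_mul {α β γ : Type*} (s : Finset γ) (f : γ → α → ℝ≥0∞)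
    (g : γ → β → ℝ≥0∞) :
    ∑' a, ∑' b, ∑ c ∈ s, f c a * g c b = ∑ c ∈ s, (∑' a, f c a) * ∑' b, g c b := by
  simp_rw [Summable.tsum_finsetSum fun _ _ => ENNReal.summable, ENNReal.tsum_mul_left,
    ENNReal.tsum_mul_right]

theorem Finset.exists_subset_sdiff_subset_of_subset_union {ι : Type*} [DecidableEq ι]
    {B S₁ S₂ : Finset ι} (h : B ⊆ S₁ ∪ S₂) : ∃ A ∈ B.powerset, A ⊆ S₁ ∧ B \ A ⊆ S₂ :=
  ⟨B ∩ S₁, mem_powerset.2 inter_subset_left, inter_subset_right,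
    by rw [sdiff_inter_self_left]; exact sdiff_le_iff.2 h⟩

theorem ite_subset_union_le_sum_powerset {ι : Type*} [DecidableEq ι] (B S₁ S₂ : Finset ι)
    (x y : ℝ≥0∞) :
    (if B ⊆ S₁ ∪ S₂ then x * y else 0) ≤
      ∑ A ∈ B.powerset, (if A ⊆ S₁ then x else 0) * (if B \ A ⊆ S₂ then y else 0) := by
  split_ifs with h
  · obtain ⟨A, hA, hA₁, hA₂⟩ := exists_subset_sdiff_subset_of_subset_union h
    refine le_trans (le_of_eq ?_) (single_le_sum_of_canonicallyOrdered hA)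
    rw [if_pos hA₁, if_pos hA₂]
  · exact zero_le

theorem LocallyDecaying.tsum_ite_subset_le {ι : Type*} [DecidableEq ι] {μ : PMF (Finset ι)}
    {τ : ℝ} (h : LocallyDecaying μ τ) (hτ : 0 ≤ τ) (B : Finset ι) :
    (∑' S : Finset ι, if B ⊆ S then μ S else 0) ≤ ENNReal.ofReal τ ^ #B := by
  rw [← ENNReal.ofReal_pow hτ]
  exact h B

/-- **Closure of locally decaying distributions under union (two factors).**
If `S₁ ~ μ₁` and `S₂ ~ μ₂` are independent random finite subsets of `ι`, locally
decaying with rates `τ₁ ≥ 0` and `τ₂ ≥ 0`, then for every finite `B ⊆ ι` the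
probability (under the product distribution) that `B ⊆ S₁ ∪ S₂` is at most
`(τ₁ + τ₂) ^ |B|`; i.e. `S₁ ∪ S₂` is locally decaying with rate `τ₁ + τ₂`. -/
theorem locallyDecaying_union {ι : Type*} [DecidableEq ι] (τ₁ τ₂ : ℝ)
    (hτ₁ : 0 ≤ τ₁) (hτ₂ : 0 ≤ τ₂) (μ₁ μ₂ : PMF (Finset ι))
    (h₁ : LocallyDecaying μ₁ τ₁) (h₂ : LocallyDecaying μ₂ τ₂) :
    ∀ B : Finset ι,
      (∑' S₁ : Finset ι, ∑' S₂ : Finset ι,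
          if B ⊆ S₁ ∪ S₂ then μ₁ S₁ * μ₂ S₂ else 0)
        ≤ ENNReal.ofReal ((τ₁ + τ₂) ^ B.card) := by
  intro B
  rw [ENNReal.ofReal_pow (add_nonneg hτ₁ hτ₂), ENNReal.ofReal_add hτ₁ hτ₂,
    ← sum_powerset_pow_mul_pow_sdiff]
  calc _ ≤ ∑' S₁ : Finset ι, ∑' S₂ : Finset ι, ∑ A ∈ B.powerset,
          (if A ⊆ S₁ then μ₁ S₁ else 0) * (if B \ A ⊆ S₂ then μ₂ S₂ else 0) :=
        ENNReal.tsum_le_tsum fun S₁ => ENNReal.tsum_le_tsum fun S₂ =>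
          ite_subset_union_le_sum_powerset B S₁ S₂ _ _
    _ = ∑ A ∈ B.powerset, (∑' S₁ : Finset ι, if A ⊆ S₁ then μ₁ S₁ else 0) *
          ∑' S₂ : Finset ι, if B \ A ⊆ S₂ then μ₂ S₂ else 0 :=
        ENNReal.tsum_tsum_sum_mul _ _ _
    _ ≤ _ := sum_le_sum fun A _ =>
        mul_le_mul' (h₁.tsum_ite_subset_le hτ₁ A) (h₂.tsum_ite_subset_le hτ₂ (B \ A))
end

section
/- Let ι be a type, k a natural number, τ : Fin k → ℝ with τ j ≥ 0 for all j, and let μ_j (j ∈ Fin k) be probability mass functions on Finset ι, each locally decaying with rate τ j. Consider the product distribution of the μ_j on k-tuples (S_0, …, S_{k-1}) of finite subsets of ι (i.e., the S_j are mutually independent). Then for every finite subset B of ι, the probability that B ⊆ S_0 ∪ ⋯ ∪ S_{k-1} is at most (∑_{j} τ j)^{B.card}. In other words, the union of finitely many independent locally decaying random subsets is locally decaying with rate equal to the sum of the rates. -/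
open scoped ENNReal

/-!
If `B ⊆ ⋃ j, S j`, choose for each `b ∈ B` an index `σ b` with `b ∈ S (σ b)`; then every `S j`
contains the fibre `σ⁻¹(j)`. A union bound over the `k ^ |B|` assignments `σ`, independence of the
`S j`, and local decay of each factor bound the probability by
`∑ σ, ∏ j, τ j ^ |σ⁻¹(j)| = (∑ j, τ j) ^ |B|`.
-/

open Finset

theorem ENNReal.tsum_pi_prod {k : ℕ} {β : Fin k → Type*} (f : ∀ j, β j → ℝ≥0∞) :
    ∑' g : (∀ j, β j), ∏ j, f j (g j) = ∏ j, ∑' b, f j b := by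
  induction k with
  | zero => simp
  | succ n ih =>
    rw [← (Fin.consEquiv β).tsum_eq, ENNReal.tsum_prod', Fin.prod_univ_succ]
    simp [Fin.prod_univ_succ, ENNReal.tsum_mul_left, ENNReal.tsum_mul_right, ih]

section Assignment

variable {ι κ : Type*} [DecidableEq κ] {B : Finset ι}

def assignedTo (σ : B → κ) (j : κ) : Finset ι :=
  {b ∈ B.attach | σ b = j}.map (.subtype _)

theorem exists_assignedTo_subset [Fintype κ] [DecidableEq ι] {S : κ → Finset ι}
    (hB : B ⊆ univ.biUnion S) : ∃ σ : B → κ, ∀ j, assignedTo σ j ⊆ S j := by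
  choose σ hσ using fun b : B => mem_biUnion.mp (hB b.2)
  refine ⟨σ, fun j x hx => ?_⟩
  obtain ⟨b, hb, rfl⟩ := mem_map.mp hx
  exact (mem_filter.mp hb).2 ▸ (hσ b).2

theorem sum_prod_pow_card_assignedTo [Fintype κ] [DecidableEq ι] {R : Type*} [CommSemiring R]
    (τ : κ → R) :
    ∑ σ : B → κ, ∏ j, τ j ^ #(assignedTo σ j) = (∑ j, τ j) ^ #B := by
  have hfiber (σ : B → κ) : ∏ j, τ j ^ #(assignedTo σ j) = ∏ b, τ (σ b) := by
    rw [← prod_fiberwise univ σ]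
    refine prod_congr rfl fun j _ => ?_
    rw [assignedTo, card_map, ← prod_const]
    exact prod_congr rfl fun b hb => by rw [(mem_filter.mp hb).2]
  simp_rw [hfiber, ← Fintype.prod_sum, prod_const, card_univ, Fintype.card_coe]

theorem ite_subset_biUnion_le_sum_assignedTo [Fintype κ] [DecidableEq ι] (S : κ → Finset ι)
    (w : κ → Finset ι → ℝ≥0∞) :
    (if B ⊆ univ.biUnion S then ∏ j, w j (S j) else 0)
      ≤ ∑ σ : B → κ, ∏ j, if assignedTo σ j ⊆ S j then w j (S j) else 0 := by
  split_ifs with hB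
  · obtain ⟨σ, hσ⟩ := exists_assignedTo_subset hB
    calc ∏ j, w j (S j) = ∏ j, if assignedTo σ j ⊆ S j then w j (S j) else 0 := by
          simp [hσ]
      _ ≤ _ := single_le_sum (f := fun σ => ∏ j, if assignedTo σ j ⊆ S j then w j (S j) else 0)
          (fun _ _ => zero_le) (mem_univ σ)
  · exact zero_le

end Assignment

theorem LocallyDecaying.tsum_pi_prod_le {ι : Type*} [DecidableEq ι] {k : ℕ} {τ : Fin k → ℝ}
    (hτ : ∀ j, 0 ≤ τ j) {μ : Fin k → PMF (Finset ι)} (h : ∀ j, LocallyDecaying (μ j) (τ j))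
    (A : Fin k → Finset ι) :
    ∑' S : Fin k → Finset ι, ∏ j, (if A j ⊆ S j then μ j (S j) else 0)
      ≤ ENNReal.ofReal (∏ j, τ j ^ #(A j)) := by
  rw [ENNReal.tsum_pi_prod fun j s => if A j ⊆ s then μ j s else 0,
    ENNReal.ofReal_prod_of_nonneg fun j _ => pow_nonneg (hτ j) _]
  exact prod_le_prod' fun j _ => h j (A j)

/-- **Closure of locally decaying distributions under union (finitely many factors).**
If `S_0, …, S_{k-1}` are mutually independent random finite subsets of `ι`, with
`S_j ~ μ_j` locally decaying with rate `τ j ≥ 0`, then for every finite `B ⊆ ι` the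
probability (under the product distribution) that `B ⊆ S_0 ∪ ⋯ ∪ S_{k-1}` is at
most `(∑ j, τ j) ^ |B|`. -/
theorem locallyDecaying_iUnion {ι : Type*} [DecidableEq ι] (k : ℕ)
    (τ : Fin k → ℝ) (hτ : ∀ j, 0 ≤ τ j)
    (μ : Fin k → PMF (Finset ι)) (h : ∀ j, LocallyDecaying (μ j) (τ j)) :
    ∀ B : Finset ι,
      (∑' S : Fin k → Finset ι,
          if B ⊆ Finset.univ.biUnion (fun j => S j) then ∏ j, μ j (S j) else 0)
        ≤ ENNReal.ofReal ((∑ j, τ j) ^ B.card) := by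
  intro B
  calc (∑' S : Fin k → Finset ι, if B ⊆ univ.biUnion S then ∏ j, μ j (S j) else 0)
      ≤ ∑' S : Fin k → Finset ι, ∑ σ : B → Fin k,
          ∏ j, if assignedTo σ j ⊆ S j then μ j (S j) else 0 :=
        ENNReal.tsum_le_tsum fun S => ite_subset_biUnion_le_sum_assignedTo S fun j => μ j
    _ = ∑ σ : B → Fin k, ∑' S : Fin k → Finset ι,
          ∏ j, if assignedTo σ j ⊆ S j then μ j (S j) else 0 :=
        Summable.tsum_finsetSum fun _ _ => ENNReal.summable
    _ ≤ ∑ σ : B → Fin k, ENNReal.ofReal (∏ j, τ j ^ #(assignedTo σ j)) :=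
        sum_le_sum fun σ _ => LocallyDecaying.tsum_pi_prod_le hτ h (assignedTo σ)
    _ = ENNReal.ofReal ((∑ j, τ j) ^ #B) := by
        rw [← ENNReal.ofReal_sum_of_nonneg fun σ _ => prod_nonneg fun j _ => pow_nonneg (hτ j) _,
          sum_prod_pow_card_assignedTo]
end

section
/- Let ι, D, A be types with injective maps d : ι → D and a : ι → A. Let p₁, p₂, p₃ ≥ 0 and let μ_D, μ_A, μ_F be probability mass functions on Finset D, Finset A, and Finset ι respectively, each locally decaying with rates p₁, p₂, p₃. Consider the product distribution on triples (S_D, S_A, F) (i.e., the three random subsets are independent). Then for every finite subset T of ι, the probability of the event {(S_D,S_A,F) : ∀ i ∈ T, d i ∈ S_D ∨ a i ∈ S_A ∨ i ∈ F} is at most (p₁ + p₂ + p₃)^{T.card}. -/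
/-!
If every `i ∈ T` is covered by `S_D` (through `d`), by `S_A` (through `a`) or by `F`, then sorting
`T` by the first of the three that covers `i` splits it as `T₁ ⊔ T₂ ⊔ T₃` with `d '' T₁ ⊆ S_D`,
`a '' T₂ ⊆ S_A` and `T₃ ⊆ F`. A union bound over all such splittings, independence and local decay
(injectivity of `d` and `a` keeps `|d '' T₁| = |T₁|`, `|a '' T₂| = |T₂|`) bound the probability by
`∑ p₁ ^ |T₁| * p₂ ^ |T₂| * p₃ ^ |T₃|`, the trinomial expansion of `(p₁ + p₂ + p₃) ^ |T|`.
-/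

open scoped ENNReal

open Finset

theorem Finset.sum_pow_mul_pow_mul_eq_add_add_pow {ι R : Type*} [DecidableEq ι]
    [CommSemiring R] (x y z : R) (T : Finset ι) :
    ∑ T₁ ∈ T.powerset, ∑ T₂ ∈ (T \ T₁).powerset, x ^ #T₁ * y ^ #T₂ * z ^ #((T \ T₁) \ T₂) =
      (x + y + z) ^ #T := by
  rw [add_assoc, ← sum_pow_mul_eq_add_pow]
  refine sum_congr rfl fun T₁ hT₁ => ?_
  rw [← card_sdiff_of_subset (mem_powerset.1 hT₁), ← sum_pow_mul_eq_add_pow, mul_sum]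
  refine sum_congr rfl fun T₂ hT₂ => ?_
  rw [card_sdiff_of_subset (mem_powerset.1 hT₂), mul_assoc]

theorem ENNReal.tsum_tsum_tsum_ite_and_mul {α β γ : Type*} (P : α → Prop) (Q : β → Prop)
    (R : γ → Prop) [DecidablePred P] [DecidablePred Q] [DecidablePred R]
    (f : α → ℝ≥0∞) (g : β → ℝ≥0∞) (h : γ → ℝ≥0∞) :
    (∑' x, ∑' y, ∑' z, if P x ∧ Q y ∧ R z then f x * g y * h z else 0) =
      (∑' x, if P x then f x else 0) * (∑' y, if Q y then g y else 0) *
        ∑' z, if R z then h z else 0 := by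
  have ite_and_eq : ∀ x y z, (if P x ∧ Q y ∧ R z then f x * g y * h z else 0) =
      (if P x then f x else 0) * (if Q y then g y else 0) * (if R z then h z else 0) := by
    intro x y z
    split_ifs <;> simp_all
  simp only [ite_and_eq, ENNReal.tsum_mul_left, ENNReal.tsum_mul_right]

theorem LocallyDecaying.tsum_le {ι : Type*} [DecidableEq ι] {μ : PMF (Finset ι)} {τ : ℝ}
    (hμ : LocallyDecaying μ τ) (hτ : 0 ≤ τ) (B : Finset ι) :
    (∑' S : Finset ι, if B ⊆ S then μ S else 0) ≤ ENNReal.ofReal τ ^ #B :=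
  (hμ B).trans_eq (ENNReal.ofReal_pow hτ _)

theorem ite_forall_or_le_sum_powerset {ι D A M : Type*} [DecidableEq ι] [DecidableEq D]
    [DecidableEq A] [AddCommMonoid M] [PartialOrder M] [IsOrderedAddMonoid M]
    [CanonicallyOrderedAdd M] (d : ι → D) (a : ι → A) (T : Finset ι) (SD : Finset D)
    (SA : Finset A) (F : Finset ι) (w : M) :
    (if ∀ i ∈ T, d i ∈ SD ∨ a i ∈ SA ∨ i ∈ F then w else 0) ≤
      ∑ T₁ ∈ T.powerset, ∑ T₂ ∈ (T \ T₁).powerset,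
        if T₁.image d ⊆ SD ∧ T₂.image a ⊆ SA ∧ (T \ T₁) \ T₂ ⊆ F then w else 0 := by
  split_ifs with hT
  · set T₁ := T.filter (d · ∈ SD)
    set T₂ := (T \ T₁).filter (a · ∈ SA)
    have hcover : T₁.image d ⊆ SD ∧ T₂.image a ⊆ SA ∧ (T \ T₁) \ T₂ ⊆ F := by
      refine ⟨image_subset_iff.2 fun i hi => (mem_filter.1 hi).2,
        image_subset_iff.2 fun i hi => (mem_filter.1 hi).2, fun i hi => ?_⟩
      simp only [mem_sdiff, mem_filter, T₁, T₂] at hi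
      grind
    have hT₁ : T₁ ∈ T.powerset := mem_powerset.2 (filter_subset _ _)
    have hT₂ : T₂ ∈ (T \ T₁).powerset := mem_powerset.2 (filter_subset _ _)
    refine (single_le_sum (fun _ _ => zero_le) hT₁).trans' ?_
    refine (single_le_sum (fun _ _ => zero_le) hT₂).trans' ?_
    rw [if_pos hcover]
  · exact zero_le

/-- **Union bound over fault types (equations (union_bound) and (multinomial) in
the proof of Lemma 1).** With `S_D ~ μ_D`, `S_A ~ μ_A`, `F ~ μ_F` independent and
locally decaying with rates `p₁, p₂, p₃ ≥ 0` (the supports of the input errors on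
blocks `D` and `A`, labelled via injections `d, a`, and the faulty CNOT locations),
the probability that every edge `i ∈ T` carries a fault, i.e. that for every
`i ∈ T` one has `d i ∈ S_D` or `a i ∈ S_A` or `i ∈ F`, is at most
`(p₁ + p₂ + p₃) ^ |T|`. -/
theorem fault_union_bound {ι D A : Type*}
    [DecidableEq ι] [DecidableEq D] [DecidableEq A]
    (d : ι → D) (a : ι → A) (hd : Function.Injective d) (ha : Function.Injective a)
    (p₁ p₂ p₃ : ℝ) (hp₁ : 0 ≤ p₁) (hp₂ : 0 ≤ p₂) (hp₃ : 0 ≤ p₃)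
    (μD : PMF (Finset D)) (μA : PMF (Finset A)) (μF : PMF (Finset ι))
    (hμD : LocallyDecaying μD p₁) (hμA : LocallyDecaying μA p₂)
    (hμF : LocallyDecaying μF p₃) :
    ∀ T : Finset ι,
      (∑' SD : Finset D, ∑' SA : Finset A, ∑' F : Finset ι,
          if ∀ i ∈ T, d i ∈ SD ∨ a i ∈ SA ∨ i ∈ F
          then μD SD * μA SA * μF F else 0)
        ≤ ENNReal.ofReal ((p₁ + p₂ + p₃) ^ T.card) := by
  intro T
  calc _ ≤ ∑' SD : Finset D, ∑' SA : Finset A, ∑' F : Finset ι,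
          ∑ T₁ ∈ T.powerset, ∑ T₂ ∈ (T \ T₁).powerset,
            if T₁.image d ⊆ SD ∧ T₂.image a ⊆ SA ∧ (T \ T₁) \ T₂ ⊆ F
            then μD SD * μA SA * μF F else 0 := by
        gcongr with SD SA F
        exact ite_forall_or_le_sum_powerset d a T SD SA F _
    _ = ∑ T₁ ∈ T.powerset, ∑ T₂ ∈ (T \ T₁).powerset,
          ∑' SD : Finset D, ∑' SA : Finset A, ∑' F : Finset ι,
            if T₁.image d ⊆ SD ∧ T₂.image a ⊆ SA ∧ (T \ T₁) \ T₂ ⊆ F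
            then μD SD * μA SA * μF F else 0 := by
        simp only [Summable.tsum_finsetSum fun _ _ => ENNReal.summable]
    _ ≤ ∑ T₁ ∈ T.powerset, ∑ T₂ ∈ (T \ T₁).powerset, ENNReal.ofReal p₁ ^ #T₁ *
          ENNReal.ofReal p₂ ^ #T₂ * ENNReal.ofReal p₃ ^ #((T \ T₁) \ T₂) := by
        gcongr with T₁ _ T₂ _
        rw [ENNReal.tsum_tsum_tsum_ite_and_mul, ← card_image_of_injective T₁ hd,
          ← card_image_of_injective T₂ ha]
        gcongr
        exacts [hμD.tsum_le hp₁ _, hμA.tsum_le hp₂ _, hμF.tsum_le hp₃ _]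
    _ = ENNReal.ofReal ((p₁ + p₂ + p₃) ^ T.card) := by
        rw [sum_pow_mul_pow_mul_eq_add_add_pow, ENNReal.ofReal_pow (by positivity),
          ENNReal.ofReal_add (by positivity) hp₃, ENNReal.ofReal_add hp₁ hp₂]
end

section
/- Let ι, β be types and f : β → ι a map each of whose fibers contains at most 2 elements. Let τ ∈ [0,1] and let μ be a probability mass function on Finset ι that is locally decaying with rate τ. Then the random subset f⁻¹(S) of β (for S distributed according to μ) is locally decaying with rate Real.sqrt τ: for every finite subset E of β, the probability under μ of the event {S : ∀ x ∈ E, f x ∈ S} is at most (Real.sqrt τ)^{E.card}. -/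
open scoped ENNReal

/-- **Square-root degradation of the locally decaying rate (Lemma 1).**
Let `f : β → ι` have fibers of size at most `2` (each CNOT edge covers two qubits:
among any three elements of a fiber, two coincide).  If `S ~ μ` is a locally
decaying random finite subset of `ι` with rate `τ ∈ [0,1]`, then the pullback
`f⁻¹(S)` is locally decaying with rate `√τ`: for every finite `E ⊆ β`, the
probability that `f x ∈ S` for all `x ∈ E` is at most `(√τ) ^ |E|`. -/
theorem locallyDecaying_preimage_sqrt {ι β : Type*} [DecidableEq ι]
    (f : β → ι)
    (hf : ∀ x y z : β, f x = f y → f y = f z → x = y ∨ x = z ∨ y = z)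
    (τ : ℝ) (hτ0 : 0 ≤ τ) (hτ1 : τ ≤ 1)
    (μ : PMF (Finset ι)) (hμ : LocallyDecaying μ τ) :
    ∀ E : Finset β,
      (∑' S : Finset ι, if ∀ x ∈ E, f x ∈ S then μ S else 0)
        ≤ ENNReal.ofReal (Real.sqrt τ ^ E.card) := by
  intro E
  classical
  set B := E.image f with hB
  have hsum : (∑' S : Finset ι, if ∀ x ∈ E, f x ∈ S then μ S else 0)
      = ∑' S : Finset ι, if B ⊆ S then μ S else 0 := by
    refine tsum_congr fun S => ?_
    simp [hB, Finset.image_subset_iff]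
  have hcard : E.card ≤ 2 * B.card := by
    refine Finset.card_le_mul_card_image E 2 fun a _ => ?_
    by_contra h
    push_neg at h
    rw [Nat.lt_iff_add_one_le] at h
    obtain ⟨x, hx, y, hy, z, hz, hxy, hxz, hyz⟩ := Finset.two_lt_card.mp h
    simp only [Finset.mem_filter] at hx hy hz
    rcases hf x y z (hx.2.trans hy.2.symm) (hy.2.trans hz.2.symm) with h' | h' | h' <;>
      [exact hxy h'; exact hxz h'; exact hyz h']
  have hs0 : (0:ℝ) ≤ Real.sqrt τ := Real.sqrt_nonneg τ
  have hs1 : Real.sqrt τ ≤ 1 := Real.sqrt_le_one.mpr hτ1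
  have hreal : τ ^ B.card ≤ Real.sqrt τ ^ E.card := by
    have : τ ^ B.card = Real.sqrt τ ^ (2 * B.card) := by
      rw [pow_mul, Real.sq_sqrt hτ0]
    rw [this]
    exact pow_le_pow_of_le_one hs0 hs1 hcard
  rw [hsum]
  exact (hμ B).trans (ENNReal.ofReal_le_ofReal hreal)
end

section
/- Let ι be a type and p₁, p₂, p₃ ≥ 0 with p₁ + p₂ + p₃ ≤ 1. Let μ₁, μ₂, μ₃ be probability mass functions on Finset ι, locally decaying with rates p₁, p₂, p₃ respectively, and consider the product distribution on triples (S_D, S_A, F) of independent random subsets of ι. Model the qubits of the two code blocks as ι × Bool and define the random output support S_out = (S_D ∪ S_A ∪ F) ×ˢ {false, true} ⊆ ι × Bool. Then for every finite subset E of ι × Bool, the probability that E ⊆ S_out is at most (Real.sqrt (p₁ + p₂ + p₃))^{E.card}; that is, the error support propagated through the noisy transversal CNOT layer is locally decaying with rate √(p₁+p₂+p₃). -/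
open scoped ENNReal

/-!
If `B ⊆ S ∪ T`, then `B ∩ S ⊆ S` and `B \ S ⊆ T`. A union bound over the part `B₁ = B ∩ S`
covered by `S` therefore gives `P(B ⊆ S ∪ T) ≤ ∑_{B₁ ⊆ B} p ^ |B₁| q ^ |B \ B₁| = (p + q) ^ |B|`
for independent `S`, `T` locally decaying with rates `p`, `q`, and two applications handle
`S_D ∪ S_A ∪ F`. The event `E ⊆ U ×ˢ {false, true}` only depends on the projection `B` of `E`
to `ι`, and `|E| ≤ 2 |B|`, so `(p₁ + p₂ + p₃) ^ |B| ≤ √(p₁ + p₂ + p₃) ^ |E|` as the rate is at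
most `1`.
-/

open Finset

section

variable {ι : Type*} [DecidableEq ι]

namespace PMF

noncomputable def indepUnion (μ ν : PMF (Finset ι)) : PMF (Finset ι) :=
  μ.bind fun S => ν.map (S ∪ ·)

theorem toOuterMeasure_indepUnion_apply (μ ν : PMF (Finset ι)) (s : Set (Finset ι)) :
    (μ.indepUnion ν).toOuterMeasure s = ∑' S, μ S * ν.toOuterMeasure ((S ∪ ·) ⁻¹' s) := by
  simp only [indepUnion, toOuterMeasure_bind_apply, toOuterMeasure_map_apply]

theorem toOuterMeasure_indepUnion_indepUnion_apply (μ₁ μ₂ μ₃ : PMF (Finset ι))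
    (P : Finset ι → Prop) [DecidablePred P] :
    (μ₁.indepUnion (μ₂.indepUnion μ₃)).toOuterMeasure {U | P U} =
      ∑' S₁, ∑' S₂, ∑' S₃, if P (S₁ ∪ S₂ ∪ S₃) then μ₁ S₁ * μ₂ S₂ * μ₃ S₃ else 0 := by
  simp only [toOuterMeasure_indepUnion_apply, Set.preimage_ofPred_eq]
  simp only [toOuterMeasure_apply, Set.indicator_apply, Set.mem_ofPred_eq,
    ← ENNReal.tsum_mul_left, mul_ite, mul_zero, union_assoc, mul_assoc]

end PMF

theorem locallyDecaying_iff {μ : PMF (Finset ι)} {τ : ℝ} :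
    LocallyDecaying μ τ ↔
      ∀ B : Finset ι, μ.toOuterMeasure {S | B ⊆ S} ≤ ENNReal.ofReal (τ ^ #B) := by
  simp only [LocallyDecaying, PMF.toOuterMeasure_apply, Set.indicator_apply, Set.mem_ofPred_eq]

namespace LocallyDecaying

variable {μ ν : PMF (Finset ι)} {p q : ℝ}

theorem tsum_mul_pow_card_sdiff_le (hμ : LocallyDecaying μ p) (hp : 0 ≤ p) (hq : 0 ≤ q)
    (B : Finset ι) :
    ∑' S, μ S * ENNReal.ofReal (q ^ #(B \ S)) ≤ ENNReal.ofReal ((p + q) ^ #B) := by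
  have union_bound : ∀ S, ENNReal.ofReal (q ^ #(B \ S)) ≤
      ∑ B₁ ∈ B.powerset, if B₁ ⊆ S then ENNReal.ofReal (q ^ (#B - #B₁)) else 0 := by
    intro S
    have hmem : B ∩ S ∈ B.powerset := mem_powerset.mpr inter_subset_left
    refine le_trans ?_ (single_le_sum (fun _ _ => zero_le) hmem)
    rw [if_pos inter_subset_right, ← card_sdiff_of_subset inter_subset_left,
      sdiff_inter_self_left]
  calc ∑' S, μ S * ENNReal.ofReal (q ^ #(B \ S))
      ≤ ∑' S, ∑ B₁ ∈ B.powerset,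
          ENNReal.ofReal (q ^ (#B - #B₁)) * if B₁ ⊆ S then μ S else 0 := by
        refine ENNReal.tsum_le_tsum fun S => ?_
        grw [union_bound S]
        simp only [mul_sum, mul_ite, ite_mul, mul_zero, zero_mul, mul_comm, le_refl]
    _ = ∑ B₁ ∈ B.powerset,
          ENNReal.ofReal (q ^ (#B - #B₁)) * ∑' S, if B₁ ⊆ S then μ S else 0 := by
        rw [Summable.tsum_finsetSum fun _ _ => ENNReal.summable]
        simp only [ENNReal.tsum_mul_left]
    _ ≤ ∑ B₁ ∈ B.powerset, ENNReal.ofReal (q ^ (#B - #B₁)) * ENNReal.ofReal (p ^ #B₁) := by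
        gcongr with B₁
        exact hμ B₁
    _ = ENNReal.ofReal ((p + q) ^ #B) := by
        rw [← sum_pow_mul_eq_add_pow, ENNReal.ofReal_sum_of_nonneg fun _ _ => by positivity]
        refine sum_congr rfl fun B₁ _ => ?_
        rw [mul_comm, ENNReal.ofReal_mul (by positivity)]

theorem indepUnion (hμ : LocallyDecaying μ p) (hν : LocallyDecaying ν q) (hp : 0 ≤ p)
    (hq : 0 ≤ q) : LocallyDecaying (μ.indepUnion ν) (p + q) := by
  rw [locallyDecaying_iff] at hν ⊢
  intro B
  calc (μ.indepUnion ν).toOuterMeasure {U | B ⊆ U}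
      = ∑' S, μ S * ν.toOuterMeasure {T | B \ S ⊆ T} := by
        simp only [PMF.toOuterMeasure_indepUnion_apply, Set.preimage_ofPred_eq, sdiff_le_iff,
          sup_eq_union]
    _ ≤ ∑' S, μ S * ENNReal.ofReal (q ^ #(B \ S)) := by
        gcongr with S
        exact hν _
    _ ≤ ENNReal.ofReal ((p + q) ^ #B) := hμ.tsum_mul_pow_card_sdiff_le hp hq B

end LocallyDecaying

end

theorem card_le_two_mul_card_image_fst {α : Type*} [DecidableEq α] (E : Finset (α × Bool)) :
    #E ≤ 2 * #(E.image Prod.fst) := by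
  calc #E ≤ #(E.image Prod.fst ×ˢ E.image Prod.snd) := card_le_card subset_product
    _ ≤ #(E.image Prod.fst) * 2 := by
        rw [card_product]
        gcongr
        exact card_le_univ _
    _ = 2 * #(E.image Prod.fst) := mul_comm _ _

theorem pow_le_sqrt_pow {q : ℝ} (hq₀ : 0 ≤ q) (hq₁ : q ≤ 1) {m n : ℕ} (h : n ≤ 2 * m) :
    q ^ m ≤ Real.sqrt q ^ n := by
  rw [← Real.sq_sqrt hq₀, ← pow_mul, Real.sqrt_sq (Real.sqrt_nonneg q)]
  exact pow_le_pow_of_le_one (Real.sqrt_nonneg q) (Real.sqrt_le_one.mpr hq₁) h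

/-- **Equation (final_ld_bound) in the proof of Lemma 1 (before measurement noise).**
The qubits of the two code blocks are modeled as `ι × Bool`.  With independent
locally decaying random subsets `S_D, S_A, F ⊆ ι` of rates `p₁, p₂, p₃ ≥ 0`
(`p₁ + p₂ + p₃ ≤ 1`), the output error support of the noisy transversal CNOT
layer is contained in `S_out = (S_D ∪ S_A ∪ F) ×ˢ {false, true}`, and for every
finite `E ⊆ ι × Bool` the probability that `E ⊆ S_out` is at most
`(√(p₁ + p₂ + p₃)) ^ |E|`. -/
theorem locallyDecaying_transversal_CNOT {ι : Type*} [DecidableEq ι]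
    (p₁ p₂ p₃ : ℝ) (hp₁ : 0 ≤ p₁) (hp₂ : 0 ≤ p₂) (hp₃ : 0 ≤ p₃)
    (hsum : p₁ + p₂ + p₃ ≤ 1)
    (μ₁ μ₂ μ₃ : PMF (Finset ι))
    (hμ₁ : LocallyDecaying μ₁ p₁) (hμ₂ : LocallyDecaying μ₂ p₂)
    (hμ₃ : LocallyDecaying μ₃ p₃) :
    ∀ E : Finset (ι × Bool),
      (∑' SD : Finset ι, ∑' SA : Finset ι, ∑' F : Finset ι,
          if E ⊆ (SD ∪ SA ∪ F) ×ˢ ({false, true} : Finset Bool)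
          then μ₁ SD * μ₂ SA * μ₃ F else 0)
        ≤ ENNReal.ofReal (Real.sqrt (p₁ + p₂ + p₃) ^ E.card) := by
  intro E
  have hdecay := hμ₁.indepUnion (hμ₂.indepUnion hμ₃ hp₂ hp₃) hp₁ (add_nonneg hp₂ hp₃)
  rw [← add_assoc, locallyDecaying_iff] at hdecay
  have hevent : {U : Finset ι | E ⊆ U ×ˢ {false, true}} = {U | E.image Prod.fst ⊆ U} := by
    ext U
    simp [subset_iff, or_imp, forall_and]
  calc _ = (μ₁.indepUnion (μ₂.indepUnion μ₃)).toOuterMeasure {U | E.image Prod.fst ⊆ U} := by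
        rw [← hevent, PMF.toOuterMeasure_indepUnion_indepUnion_apply]
    _ ≤ ENNReal.ofReal ((p₁ + p₂ + p₃) ^ #(E.image Prod.fst)) := hdecay _
    _ ≤ ENNReal.ofReal (Real.sqrt (p₁ + p₂ + p₃) ^ #E) := by
        gcongr
        exact pow_le_sqrt_pow (by positivity) hsum (card_le_two_mul_card_image_fst E)
end
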